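/- arXiv:0706.1701 — 5 statements merged into one kernel-verified Lean document; each statement's English description precedes it below -/
import Mathlib

section
/- Let R ⊆ S^r be a finite r-ary relation on a finite set S, and ε > 0. The following are equivalent: (1) for all nonzero functions f₁,…,f_r : S → [0,∞), |R(f₁,…,f_r) − |R|·∏|fᵢ|₁/|S|^r| < ε|R|·∏ max(fᵢ); (2) for all nonzero functions f₁,…,f_r : S → [0,1], |R(f₁,…,f_r) − |R|·∏|fᵢ|₁/|S|^r| < ε|R|; (3) R is an ε-expander relation, i.e. for all subsets S₁,…,S_r ⊆ S, |R(S₁,…,S_r) − |R|·∏|Sᵢ|/|S|^r| < ε|R|. -/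
open Finset

attribute [local instance] Classical.propDecidable

/-- `R(S₁,…,S_r)`: the number of tuples of `R` whose `i`-th coordinate lies in `T i`. -/
noncomputable def relCount {S : Type*} {r : ℕ} (R : Finset (Fin r → S))
    (T : Fin r → Finset S) : ℝ :=
  ((R.filter fun t => ∀ i, t i ∈ T i).card : ℝ)

/-- `R(f₁,…,f_r) = Σ_{(x₁,…,x_r)∈R} ∏ᵢ fᵢ(xᵢ)`. -/
noncomputable def relApply {S : Type*} {r : ℕ} (R : Finset (Fin r → S))
    (f : Fin r → S → ℝ) : ℝ :=
  ∑ t ∈ R, ∏ i, f i (t i)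

/-- `R` is an ε-expander relation. -/
def IsExpanderRel {S : Type*} [Fintype S] {r : ℕ} (ε : ℝ) (R : Finset (Fin r → S)) : Prop :=
  ∀ T : Fin r → Finset S,
    |relCount R T - (R.card : ℝ) * (∏ i, ((T i).card : ℝ)) / (Fintype.card S : ℝ) ^ r|
      < ε * R.card

/-! The discrepancy `R(f₁,…,f_r) − |R| ∏ |fᵢ|₁ / |S|^r` is a multilinear form in `(f₁,…,f_r)`.
Being affine in each single value `fᵢ(x)`, its absolute value on `[0,1]`-valued functions is
bounded by its values at `{0,1}`-valued ones, i.e. at indicator functions of subsets; this is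
(3) ⇒ (2). Dividing each `fᵢ` by `max fᵢ` reduces (1) to (2), and indicator functions of
nonempty sets specialize (1) and (2) to (3); when some `Sᵢ` is empty both terms of (3) vanish. -/

open Function

section Cube

variable {ι S : Type*} [DecidableEq ι] [DecidableEq S]

theorem update_update_apply_eq_ite (f : ι → S → ℝ) (i : ι) (x : S) (t : ℝ) (j : ι) (y : S) :
    update f i (update (f i) x t) j y = if j = i ∧ y = x then t else f j y := by
  rcases eq_or_ne j i with rfl | hj
  · by_cases hy : y = x <;> simp [hy]
  · simp [hj]

namespace MultilinearMap

theorem map_update_update_eq_convex_comb (Φ : MultilinearMap ℝ (fun _ : ι => S → ℝ) ℝ)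
    (f : ι → S → ℝ) (i : ι) (x : S) (t : ℝ) :
    Φ (update f i (update (f i) x t)) =
      (1 - t) * Φ (update f i (update (f i) x 0)) + t * Φ (update f i (update (f i) x 1)) := by
  have hsplit : update (f i) x t = (1 - t) • update (f i) x 0 + t • update (f i) x 1 := by
    ext y
    rcases eq_or_ne y x with rfl | hy
    · simp
    · simp only [Pi.add_apply, Pi.smul_apply, update_of_ne hy, smul_eq_mul]
      ring
  rw [hsplit, Φ.map_update_add, Φ.map_update_smul, Φ.map_update_smul, smul_eq_mul, smul_eq_mul]

theorem abs_lt_of_forall_zero_one [Fintype ι] [Fintype S]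
    (Φ : MultilinearMap ℝ (fun _ : ι => S → ℝ) ℝ) {K : ℝ}
    (hK : ∀ f : ι → S → ℝ, (∀ i x, f i x = 0 ∨ f i x = 1) → |Φ f| < K)
    {f : ι → S → ℝ} (h0 : ∀ i x, 0 ≤ f i x) (h1 : ∀ i x, f i x ≤ 1) : |Φ f| < K := by
  suffices ∀ P : Finset (ι × S), ∀ f : ι → S → ℝ, (∀ i x, f i x ∈ Set.Icc (0 : ℝ) 1) →
      (∀ i x, (i, x) ∉ P → f i x = 0 ∨ f i x = 1) → |Φ f| < K from
    this univ f (fun i x => ⟨h0 i x, h1 i x⟩) (by simp)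
  intro P
  induction P using Finset.induction_on with
  | empty => exact fun f _ hf => hK f fun i x => hf i x (notMem_empty _)
  | insert p P _ ih =>
    obtain ⟨i, x⟩ := p
    intro f hf hP
    have hend : ∀ s : ℝ, (s = 0 ∨ s = 1) → |Φ (update f i (update (f i) x s))| < K := by
      intro s hs
      apply ih
      · intro j y
        rw [update_update_apply_eq_ite]
        split_ifs
        · rcases hs with rfl | rfl <;> simp
        · exact hf j y
      · intro j y hjy
        rw [update_update_apply_eq_ite]
        split_ifs with h
        · exact hs
        · refine hP j y ?_
          simp only [mem_insert, Prod.mk.injEq, not_or]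
          tauto
    obtain ⟨ht0, ht1⟩ := hf i x
    have hf_eq : f = update f i (update (f i) x (f i x)) := by simp
    have hconv := convex_ball (0 : ℝ) K (by simpa using hend 0 (.inl rfl))
      (by simpa using hend 1 (.inr rfl)) (sub_nonneg.2 ht1) ht0 (sub_add_cancel 1 (f i x))
    rw [hf_eq, map_update_update_eq_convex_comb]
    simpa using hconv

end MultilinearMap

end Cube

section Discrepancy

variable {S : Type*} [Fintype S] {r : ℕ}

noncomputable def relDiscrepancy (R : Finset (Fin r → S)) :
    MultilinearMap ℝ (fun _ : Fin r => S → ℝ) ℝ :=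
  ∑ t ∈ R, (MultilinearMap.mkPiAlgebra ℝ (Fin r) ℝ).compLinearMap (fun i => LinearMap.proj (t i))
    - ((R.card : ℝ) / (Fintype.card S : ℝ) ^ r) •
      (MultilinearMap.mkPiAlgebra ℝ (Fin r) ℝ).compLinearMap (fun _ => ∑ x, LinearMap.proj x)

theorem relDiscrepancy_apply (R : Finset (Fin r → S)) (f : Fin r → S → ℝ) :
    relDiscrepancy R f =
      relApply R f - (R.card : ℝ) * (∏ i, ∑ x, f i x) / (Fintype.card S : ℝ) ^ r := by
  simp only [relDiscrepancy, sub_apply, _root_.sum_apply,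
    MultilinearMap.compLinearMap_apply, LinearMap.coe_proj, eval, MultilinearMap.mkPiAlgebra_apply,
    smul_apply, LinearMap.coe_sum, Finset.sum_apply, smul_eq_mul, relApply,
    sub_right_inj]
  ring

theorem relDiscrepancy_indicator (R : Finset (Fin r → S)) (T : Fin r → Finset S) :
    relDiscrepancy R (fun i x => if x ∈ T i then 1 else 0) =
      relCount R T - (R.card : ℝ) * (∏ i, ((T i).card : ℝ)) / (Fintype.card S : ℝ) ^ r := by
  simp [relDiscrepancy_apply, relApply, relCount, Finset.prod_boole, Finset.sum_boole]

theorem abs_relDiscrepancy_lt {ε : ℝ} {R : Finset (Fin r → S)} (hR : IsExpanderRel ε R)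
    {f : Fin r → S → ℝ} (h0 : ∀ i x, 0 ≤ f i x) (h1 : ∀ i x, f i x ≤ 1) :
    |relDiscrepancy R f| < ε * R.card := by
  refine (relDiscrepancy R).abs_lt_of_forall_zero_one (fun g hg => ?_) h0 h1
  have hg_eq : g = fun i x => if x ∈ univ.filter (g i · = 1) then 1 else 0 := by
    ext i x
    rcases hg i x with h | h <;> simp [h]
  rw [hg_eq, relDiscrepancy_indicator]
  exact hR _

theorem isExpanderRel_of_forall_nonempty [Nonempty S] {ε : ℝ} {R : Finset (Fin r → S)}
    (hR : ∀ T : Fin r → Finset S, (∀ i, (T i).Nonempty) →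
      |relCount R T - (R.card : ℝ) * (∏ i, ((T i).card : ℝ)) / (Fintype.card S : ℝ) ^ r|
        < ε * R.card) :
    IsExpanderRel ε R := by
  intro T
  by_cases hT : ∀ i, (T i).Nonempty
  · exact hR T hT
  obtain ⟨i, hi⟩ := not_forall.1 hT
  rw [not_nonempty_iff_eq_empty] at hi
  have hcount : relCount R T = 0 := by
    rw [relCount, filter_false_of_mem fun t _ ht => by simpa [hi] using ht i, card_empty,
      Nat.cast_zero]
  have hprod : ∏ j, ((T j).card : ℝ) = 0 := prod_eq_zero (mem_univ i) (by simp [hi])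
  rw [hcount, hprod, mul_zero, zero_div, sub_zero, abs_zero]
  exact (abs_nonneg _).trans_lt (hR (fun _ => univ) fun _ => univ_nonempty)

theorem abs_relDiscrepancy_lt_mul_iSup {ε : ℝ} {R : Finset (Fin r → S)}
    (hR : IsExpanderRel ε R) {f : Fin r → S → ℝ} (h0 : ∀ i x, 0 ≤ f i x)
    (hne : ∀ i, ∃ x, f i x ≠ 0) :
    |relDiscrepancy R f| < ε * R.card * ∏ i, ⨆ x, f i x := by
  set M : Fin r → ℝ := fun i => ⨆ x, f i x
  have hle (i : Fin r) (x : S) : f i x ≤ M i := le_ciSup (Finite.bddAbove_range _) x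
  have hM (i : Fin r) : 0 < M i := by
    obtain ⟨x, hx⟩ := hne i
    exact ((h0 i x).lt_of_ne' hx).trans_le (hle i x)
  have hf : f = fun i => M i • fun x => f i x / M i := by
    ext i x
    simp [mul_div_cancel₀ _ (hM i).ne']
  have hMprod : 0 < ∏ i, M i := prod_pos fun i _ => hM i
  rw [hf, MultilinearMap.map_smul_univ, smul_eq_mul, abs_mul, abs_of_pos hMprod, mul_comm]
  exact mul_lt_mul_of_pos_right (abs_relDiscrepancy_lt hR
    (fun i x => div_nonneg (h0 i x) (hM i).le) (fun i x => div_le_one_of_le₀ (hle i x) (hM i).le))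
    hMprod

theorem iSup_ite_mem_one_zero {A : Finset S} (hA : A.Nonempty) :
    (⨆ x, if x ∈ A then (1 : ℝ) else 0) = 1 := by
  obtain ⟨a, ha⟩ := hA
  have : Nonempty S := ⟨a⟩
  refine le_antisymm (ciSup_le fun x => by split_ifs <;> norm_num) ?_
  exact (le_ciSup (Finite.bddAbove_range _) a).trans_eq' (by simp [ha])

end Discrepancy

/-- Lemma 3 (equivalent definitions of an ε-expander relation): the functional form with
maxima feasible for `[0,∞)`-valued functions, the `[0,1]`-valued functional form, and the
subset (Boolean) form are all equivalent. -/
theorem expanderRel_equivalent_definitions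
    {S : Type*} [Fintype S] [Nonempty S] {r : ℕ}
    (R : Finset (Fin r → S)) (ε : ℝ) :
    ((∀ f : Fin r → S → ℝ, (∀ i x, 0 ≤ f i x) → (∀ i, ∃ x, f i x ≠ 0) →
        |relApply R f - (R.card : ℝ) * (∏ i, ∑ x, |f i x|) / (Fintype.card S : ℝ) ^ r|
          < ε * R.card * ∏ i, ⨆ x, f i x) ↔ IsExpanderRel ε R) ∧
    ((∀ f : Fin r → S → ℝ, (∀ i x, 0 ≤ f i x) → (∀ i x, f i x ≤ 1) →
        (∀ i, ∃ x, f i x ≠ 0) →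
        |relApply R f - (R.card : ℝ) * (∏ i, ∑ x, |f i x|) / (Fintype.card S : ℝ) ^ r|
          < ε * R.card) ↔ IsExpanderRel ε R) := by
  have habs (f : Fin r → S → ℝ) (h0 : ∀ i x, 0 ≤ f i x) :
      relApply R f - (R.card : ℝ) * (∏ i, ∑ x, |f i x|) / (Fintype.card S : ℝ) ^ r =
        relDiscrepancy R f := by
    simp [abs_of_nonneg, h0, relDiscrepancy_apply]
  have hT0 (T : Fin r → Finset S) (i : Fin r) (x : S) : 0 ≤ if x ∈ T i then (1 : ℝ) else 0 :=
    ite_nonneg zero_le_one le_rfl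
  have hT1 (T : Fin r → Finset S) (i : Fin r) (x : S) : (if x ∈ T i then (1 : ℝ) else 0) ≤ 1 := by
    split_ifs <;> norm_num
  have hTne (T : Fin r → Finset S) (hT : ∀ i, (T i).Nonempty) (i : Fin r) :
      ∃ x, (if x ∈ T i then (1 : ℝ) else 0) ≠ 0 :=
    (hT i).imp fun x hx => by simp [hx]
  refine ⟨⟨fun hA => isExpanderRel_of_forall_nonempty fun T hT => ?_,
      fun hR f h0 hne => habs f h0 ▸ abs_relDiscrepancy_lt_mul_iSup hR h0 hne⟩,
    ⟨fun hB => isExpanderRel_of_forall_nonempty fun T hT => ?_,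
      fun hR f h0 h1 _ => habs f h0 ▸ abs_relDiscrepancy_lt hR h0 h1⟩⟩
  · have h := hA _ (hT0 T) (hTne T hT)
    rwa [habs _ (hT0 T), relDiscrepancy_indicator,
      prod_congr rfl fun i _ => iSup_ite_mem_one_zero (hT i), prod_const_one, mul_one] at h
  · have h := hB _ (hT0 T) (hT1 T) (hTne T hT)
    rwa [habs _ (hT0 T), relDiscrepancy_indicator] at h
end

section
/- Let G = (V,E) be a simple undirected d-regular graph with second eigenvalue λ (in absolute value), and let k ≥ 2. Define the k-ary relation R_k ⊆ V^k by R_k = {(a₁,…,a_k) : (aᵢ, a_{i+1}) is an edge of G for all 1 ≤ i ≤ k−1}. Then R_k is a (k−1)·(|λ|/d)-expander relation, i.e. for all subsets S₁,…,S_k ⊆ V, |R_k(S₁,…,S_k) − |R_k|·∏_{i=1}^k |Sᵢ|/|V|^k| < (k−1)·(|λ|/d)·|R_k|. -/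
open Finset

attribute [local instance] Classical.propDecidable

/-- `E(A,B)`: number of ordered pairs `(a,b) ∈ A × B` with `a` adjacent to `b`. -/
noncomputable def edgeCount {V : Type*} (G : SimpleGraph V) (A B : Finset V) : ℕ :=
  ((A ×ˢ B).filter fun p => G.Adj p.1 p.2).card

/-- `R_k`: the `k`-ary relation of walks of length `k-1` in `G`
(consecutive coordinates adjacent). -/
noncomputable def walkRel {V : Type*} [Fintype V] (G : SimpleGraph V) (k : ℕ) :
    Finset (Fin k → V) :=
  Finset.univ.filter fun t =>
    ∀ i : Fin k, ∀ h : (i : ℕ) + 1 < k, G.Adj (t i) (t ⟨(i : ℕ) + 1, h⟩)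

/-! Peel off the first vertex of a walk. If `c w` counts the walks of length `k - 2` from `w` that
respect `T 2, …, T (k-1)`, then `R_k(T) = ∑_{w ∈ T 1} c w · |N(w) ∩ T 0|`, while
`(d |T 0| / n) · R_{k-1}(T 1, …)` is the same sum with `|N(w) ∩ T 0|` replaced by its mean
`d |T 0| / n`. As `0 ≤ c w ≤ d^(k-2)`, the difference is a linear form in `c` on a box, so it is
extremal at `c = d^(k-2) · 1_S` for some `S ⊆ T 1`, where the expander mixing lemma bounds it by
`d^(k-2) λ n` (strictly: either `T 0 = V` and every summand vanishes, or `|T 0| < n`). Induction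
on `k` adds up `k - 1` such errors, each equal to `(λ / d) |R_k|`.
-/

section RelCount

variable {S : Type*} {r : ℕ} (R : Finset (Fin r → S))

theorem relCount_mono {T T' : Fin r → Finset S} (h : ∀ i, T i ⊆ T' i) :
    relCount R T ≤ relCount R T' := by
  unfold relCount
  gcongr with t _ i
  exact h i

theorem relCount_eq_sum_relCount_update (T : Fin r → Finset S) (i : Fin r) :
    relCount R T = ∑ w ∈ T i, relCount R (Function.update T i {w}) := by
  unfold relCount
  rw [card_eq_sum_card_fiberwise (f := fun t => t i) (t := T i)
    fun t ht => by exact (mem_filter.1 ht).2 i]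
  push_cast
  refine sum_congr rfl fun w _ => ?_
  rw [filter_filter]
  congr 2
  refine filter_congr fun t _ => ⟨?_, fun h => ?_⟩
  · rintro ⟨h, rfl⟩ j
    rcases eq_or_ne j i with rfl | hj <;> simp [*]
  · have hi : t i = w := by simpa using h i
    refine ⟨fun j => ?_, hi⟩
    rcases eq_or_ne j i with rfl | hj
    · simpa [hi]
    · simpa [hj] using h j

end RelCount

section Walks

variable {V : Type*} [Fintype V] (G : SimpleGraph V)

theorem mem_walkRel_succ_succ {m : ℕ} {t : Fin (m + 2) → V} :
    t ∈ walkRel G (m + 2) ↔ G.Adj (t 0) (t 1) ∧ Fin.tail t ∈ walkRel G (m + 1) := by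
  simp [walkRel, Fin.forall_fin_succ (n := m + 1), Fin.tail]

theorem relCount_walkRel_one (T : Fin 1 → Finset V) : relCount (walkRel G 1) T = #(T 0) := by
  unfold relCount
  rw [card_equiv (Equiv.funUnique (Fin 1) V) (t := T 0)]
  intro t
  simp only [walkRel, mem_filter, mem_univ, true_and, Fin.forall_fin_one, Equiv.funUnique_apply]
  exact ⟨And.right, fun h => ⟨fun h' => absurd h' (by simp), h⟩⟩

theorem relCount_walkRel_update_one {m : ℕ} (T : Fin (m + 2) → Finset V) (w : V) :
    relCount (walkRel G (m + 2)) (Function.update T 1 {w}) =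
      #{v ∈ T 0 | G.Adj v w} *
        relCount (walkRel G (m + 1)) (Function.update (Fin.tail T) 0 {w}) := by
  unfold relCount
  rw [← Nat.cast_mul, ← card_product]
  congr 1
  refine (card_equiv (Fin.consEquiv fun _ => V) ?_).symm
  rintro ⟨v, s⟩
  simp only [Fin.forall_fin_succ, Function.update_self, mem_singleton, ne_eq, Fin.succ_ne_zero,
    not_false_eq_true, Function.update_of_ne, Fin.tail, mem_product, mem_filter, zero_ne_one,
    Fin.succ_zero_eq_one, Function.update_of_ne (Fin.succ_succ_ne_one _), mem_walkRel_succ_succ,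
    Fin.consEquiv_apply, Fin.cons_zero, Fin.cons_one, Fin.cons_succ]
  rw [show Fin.tail ((Fin.consEquiv fun _ => V) (v, s)) = s from Fin.tail_cons (α := fun _ => V) v s]
  constructor
  · rintro ⟨⟨hv, hvw⟩, hs, rfl, hT⟩
    exact ⟨⟨hvw, hs⟩, hv, rfl, hT⟩
  · rintro ⟨⟨hvw, hs⟩, hv, rfl, hT⟩
    exact ⟨⟨hv, hvw⟩, hs, rfl, hT⟩

theorem relCount_walkRel_succ_succ {m : ℕ} (T : Fin (m + 2) → Finset V) :
    relCount (walkRel G (m + 2)) T = ∑ w ∈ T 1, #{v ∈ T 0 | G.Adj v w} *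
      relCount (walkRel G (m + 1)) (Function.update (Fin.tail T) 0 {w}) := by
  rw [relCount_eq_sum_relCount_update _ T 1]
  refine sum_congr rfl fun w _ => ?_
  rw [relCount_walkRel_update_one]

theorem relCount_walkRel_update_zero_univ {d : ℕ} (hreg : G.IsRegularOfDegree d) (m : ℕ) (w : V) :
    relCount (walkRel G (m + 1)) (Function.update (fun _ => univ) 0 {w}) = d ^ m := by
  induction m generalizing w with
  | zero => simp [relCount_walkRel_one]
  | succ m ih =>
    rw [relCount_walkRel_succ_succ, Fin.tail_update_zero]
    simp only [Function.update_self, Function.update_of_ne (zero_ne_one' _).symm, filter_singleton]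
    simp only [show (Fin.tail fun _ => univ : Fin (m + 1) → Finset V) = fun _ => univ from rfl, ih,
      apply_ite, card_singleton, card_empty, Nat.cast_one, Nat.cast_zero]
    rw [← sum_mul, sum_boole, ← G.neighborFinset_eq_filter, G.card_neighborFinset_eq_degree,
      hreg w, pow_succ, mul_comm]

theorem card_walkRel {d : ℕ} (hreg : G.IsRegularOfDegree d) (m : ℕ) :
    (#(walkRel G (m + 1)) : ℝ) = Fintype.card V * d ^ m := by
  have huniv : relCount (walkRel G (m + 1)) (fun _ => univ) = #(walkRel G (m + 1)) := by
    simp [relCount]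
  rw [← huniv, relCount_eq_sum_relCount_update _ _ 0]
  simp [relCount_walkRel_update_zero_univ G hreg]

theorem relCount_walkRel_update_zero_le {d : ℕ} (hreg : G.IsRegularOfDegree d) {m : ℕ}
    (T : Fin (m + 1) → Finset V) (w : V) :
    relCount (walkRel G (m + 1)) (Function.update T 0 {w}) ≤ d ^ m := by
  rw [← relCount_walkRel_update_zero_univ G hreg m w]
  refine relCount_mono _ fun i => ?_
  rcases eq_or_ne i 0 with rfl | hi <;> simp [*]

end Walks

theorem sum_mul_lt_mul_of_forall_subset {ι : Type*} (A : Finset ι) {f a : ι → ℝ} {M C : ℝ}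
    (hM : 0 < M) (hf : ∀ i ∈ A, 0 ≤ f i ∧ f i ≤ M) (h : ∀ B ⊆ A, ∑ i ∈ B, a i < C) :
    ∑ i ∈ A, f i * a i < M * C := by
  rw [← sum_filter_add_sum_filter_not A (fun i => 0 ≤ a i)]
  have hpos : ∑ i ∈ A with 0 ≤ a i, f i * a i ≤ M * ∑ i ∈ A with 0 ≤ a i, a i := by
    rw [mul_sum]
    exact sum_le_sum fun i hi => by
      rw [mem_filter] at hi
      exact mul_le_mul_of_nonneg_right (hf i hi.1).2 hi.2
  have hneg : ∑ i ∈ A with ¬0 ≤ a i, f i * a i ≤ 0 :=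
    sum_nonpos fun i hi => by
      rw [mem_filter, not_le] at hi
      exact mul_nonpos_of_nonneg_of_nonpos (hf i hi.1).1 hi.2.le
  have := mul_lt_mul_of_pos_left (h _ (filter_subset (fun i => 0 ≤ a i) A)) hM
  linarith

theorem abs_sum_mul_lt_mul_of_forall_subset {ι : Type*} (A : Finset ι) {f a : ι → ℝ} {M C : ℝ}
    (hM : 0 < M) (hf : ∀ i ∈ A, 0 ≤ f i ∧ f i ≤ M) (h : ∀ B ⊆ A, |∑ i ∈ B, a i| < C) :
    |∑ i ∈ A, f i * a i| < M * C := by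
  rw [abs_lt]
  constructor
  · have := sum_mul_lt_mul_of_forall_subset A (a := fun i => -a i) (C := C) hM hf
      fun B hB => by rw [sum_neg_distrib, neg_lt]; exact (abs_lt.1 (h B hB)).1
    simp only [mul_neg, sum_neg_distrib] at this
    linarith
  · exact sum_mul_lt_mul_of_forall_subset A hM hf fun B hB => (abs_lt.1 (h B hB)).2

section Mixing

variable {V : Type*} (G : SimpleGraph V)

theorem edgeCount_eq_sum_card_filter_adj (A B : Finset V) :
    edgeCount G A B = ∑ w ∈ B, #{v ∈ A | G.Adj v w} := by
  simp only [edgeCount, card_filter, sum_product_right]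

variable [Fintype V] (d : ℕ) (lam : ℝ)

def SatisfiesExpanderMixing : Prop :=
  ∀ A B : Finset V,
    |(edgeCount G A B : ℝ) - (d : ℝ) * A.card * B.card / (Fintype.card V : ℝ)| ≤
      lam * Real.sqrt ((A.card : ℝ) * B.card)

variable {G d lam}

theorem abs_sum_card_filter_adj_sub_lt [Nonempty V] (hreg : G.IsRegularOfDegree d) (hlam : 0 < lam)
    (hmix : SatisfiesExpanderMixing G d lam) (A B : Finset V) :
    |∑ w ∈ B, ((#{v ∈ A | G.Adj v w} : ℝ) - d * #A / Fintype.card V)| < lam * Fintype.card V := by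
  have hn : (0 : ℝ) < Fintype.card V := by exact_mod_cast Fintype.card_pos
  by_cases hA : A = univ
  · subst hA
    have hdeg (w : V) : #{v ∈ univ | G.Adj v w} = d := by
      simp_rw [G.adj_comm _ w, ← G.neighborFinset_eq_filter, G.card_neighborFinset_eq_degree, hreg w]
    simp [hdeg, hn.ne', mul_pos hlam hn]
  · have hAB : (#A : ℝ) * #B < Fintype.card V * Fintype.card V := by
      have hA' : (#A : ℝ) < Fintype.card V := by exact_mod_cast (card_lt_iff_ne_univ A).2 hA
      have hB : (#B : ℝ) ≤ Fintype.card V := by exact_mod_cast card_le_univ B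
      nlinarith
    calc |∑ w ∈ B, ((#{v ∈ A | G.Adj v w} : ℝ) - d * #A / Fintype.card V)|
        = |(edgeCount G A B : ℝ) - d * #A * #B / Fintype.card V| := by
          rw [sum_sub_distrib, sum_const, nsmul_eq_mul, edgeCount_eq_sum_card_filter_adj,
            Nat.cast_sum]
          ring_nf
      _ ≤ lam * Real.sqrt (#A * #B) := hmix A B
      _ < lam * Fintype.card V := by
          gcongr
          rw [Real.sqrt_lt' hn, sq]
          exact hAB

end Mixing

section Expansion

variable {V : Type*} [Fintype V] [Nonempty V] {G : SimpleGraph V} {d : ℕ} {lam : ℝ}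

theorem abs_relCount_walkRel_sub_lt_add (hd : 0 < d) (hreg : G.IsRegularOfDegree d)
    (hlam : 0 < lam) (hmix : SatisfiesExpanderMixing G d lam) {m : ℕ} (T : Fin (m + 2) → Finset V) :
    |relCount (walkRel G (m + 2)) T - d ^ (m + 1) * (∏ i, (#(T i) : ℝ)) / Fintype.card V ^ (m + 1)|
      < lam * d ^ m * Fintype.card V + d * |relCount (walkRel G (m + 1)) (Fin.tail T) -
          d ^ m * (∏ i, (#(Fin.tail T i) : ℝ)) / Fintype.card V ^ m| := by
  have hn : (0 : ℝ) < Fintype.card V := Nat.cast_pos.2 Fintype.card_pos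
  have hprod : d ^ (m + 1) * (∏ i, (#(T i) : ℝ)) / Fintype.card V ^ (m + 1) =
      d * #(T 0) / Fintype.card V * (d ^ m * (∏ i, (#(Fin.tail T i) : ℝ)) / Fintype.card V ^ m) := by
    rw [Fin.prod_univ_succ]
    simp only [Fin.tail]
    field_simp
    ring
  set c : V → ℝ := fun w => relCount (walkRel G (m + 1)) (Function.update (Fin.tail T) 0 {w})
  set α : ℝ := d * #(T 0) / Fintype.card V
  set E := relCount (walkRel G (m + 1)) (Fin.tail T) -
    d ^ m * (∏ i, (#(Fin.tail T i) : ℝ)) / Fintype.card V ^ m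
  have hsplit : relCount (walkRel G (m + 2)) T -
      d ^ (m + 1) * (∏ i, (#(T i) : ℝ)) / Fintype.card V ^ (m + 1) =
      ∑ w ∈ T 1, c w * (#{v ∈ T 0 | G.Adj v w} - α) + α * E := by
    have hsum : ∑ w ∈ T 1, c w * (#{v ∈ T 0 | G.Adj v w} - α) =
        relCount (walkRel G (m + 2)) T - α * relCount (walkRel G (m + 1)) (Fin.tail T) := by
      rw [relCount_walkRel_succ_succ, relCount_eq_sum_relCount_update _ (Fin.tail T) 0,
        show Fin.tail T 0 = T 1 from rfl, mul_sum, ← sum_sub_distrib]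
      exact sum_congr rfl fun w _ => by ring
    rw [hsum, hprod]
    ring
  have hD : |∑ w ∈ T 1, c w * (#{v ∈ T 0 | G.Adj v w} - α)| < d ^ m * (lam * Fintype.card V) :=
    abs_sum_mul_lt_mul_of_forall_subset (T 1) (pow_pos (Nat.cast_pos.2 hd) m)
      (fun w _ => ⟨Nat.cast_nonneg _, relCount_walkRel_update_zero_le G hreg _ w⟩)
      fun B _ => abs_sum_card_filter_adj_sub_lt hreg hlam hmix (T 0) B
  have hα : 0 ≤ α ∧ α ≤ d := by
    refine ⟨by positivity, div_le_of_le_mul₀ hn.le (Nat.cast_nonneg _) ?_⟩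
    gcongr
    exact_mod_cast card_le_univ (T 0)
  rw [hsplit]
  calc _ ≤ |∑ w ∈ T 1, c w * (#{v ∈ T 0 | G.Adj v w} - α)| + |α * E| := abs_add_le _ _
    _ < d ^ m * (lam * Fintype.card V) + d * |E| := by
        rw [abs_mul, abs_of_nonneg hα.1]
        exact add_lt_add_of_lt_of_le hD (mul_le_mul_of_nonneg_right hα.2 (abs_nonneg E))
    _ = _ := by ring

theorem abs_relCount_walkRel_sub_lt (hd : 0 < d) (hreg : G.IsRegularOfDegree d) (hlam : 0 < lam)
    (hmix : SatisfiesExpanderMixing G d lam) (m : ℕ) (T : Fin (m + 2) → Finset V) :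
    |relCount (walkRel G (m + 2)) T - d ^ (m + 1) * (∏ i, (#(T i) : ℝ)) / Fintype.card V ^ (m + 1)|
      < (m + 1) * lam * d ^ m * Fintype.card V := by
  induction m with
  | zero => simpa [relCount_walkRel_one] using abs_relCount_walkRel_sub_lt_add hd hreg hlam hmix T
  | succ m ih =>
    calc _ < lam * d ^ (m + 1) * Fintype.card V + d * |relCount (walkRel G (m + 2)) (Fin.tail T) -
          d ^ (m + 1) * (∏ i, (#(Fin.tail T i) : ℝ)) / Fintype.card V ^ (m + 1)| :=
          abs_relCount_walkRel_sub_lt_add hd hreg hlam hmix T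
      _ ≤ lam * d ^ (m + 1) * Fintype.card V + d * ((m + 1) * lam * d ^ m * Fintype.card V) := by
          gcongr
          exact (ih _).le
      _ = _ := by push_cast; ring

end Expansion

/-- For a `d`-regular graph satisfying the Expander Mixing Lemma with eigenvalue bound `λ`
and `k ≥ 2`, the relation `R_k` of walks of length `k-1` is a `(k-1)·(|λ|/d)`-expander
relation. -/
theorem walkRel_isExpanderRel
    {V : Type*} [Fintype V] [Nonempty V]
    (G : SimpleGraph V) (d : ℕ) (hd : 0 < d) (hreg : G.IsRegularOfDegree d)
    (lam : ℝ) (hlam : 0 < lam)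
    (hmix : ∀ A B : Finset V,
      |(edgeCount G A B : ℝ) - (d : ℝ) * A.card * B.card / (Fintype.card V : ℝ)| ≤
        lam * Real.sqrt ((A.card : ℝ) * B.card))
    (k : ℕ) (hk : 2 ≤ k) :
    IsExpanderRel (((k : ℝ) - 1) * (lam / d)) (walkRel G k) := by
  obtain ⟨m, rfl⟩ : ∃ m, k = m + 2 := ⟨k - 2, by omega⟩
  intro T
  have hcard : (#(walkRel G (m + 2)) : ℝ) = Fintype.card V * d ^ (m + 1) :=
    card_walkRel G hreg (m + 1)
  have hn : (0 : ℝ) < Fintype.card V := Nat.cast_pos.2 Fintype.card_pos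
  have hexpected : (#(walkRel G (m + 2)) : ℝ) * (∏ i, (#(T i) : ℝ)) / Fintype.card V ^ (m + 2) =
      d ^ (m + 1) * (∏ i, (#(T i) : ℝ)) / Fintype.card V ^ (m + 1) := by
    rw [hcard]
    field_simp
    ring
  have hbound : ((m + 2 : ℕ) - 1 : ℝ) * (lam / d) * #(walkRel G (m + 2)) =
      (m + 1) * lam * d ^ m * Fintype.card V := by
    rw [hcard]
    field_simp
    push_cast
    ring
  rw [hexpected, hbound]
  exact abs_relCount_walkRel_sub_lt hd hreg hlam hmix m T
end

section
/- Let A and B be relational structures of the same type τ with all relation symbols at most r-ary, such that for each relation symbol R, the relation R(A) is an ε_A-expander relation and R(B) is an ε_B-expander relation. Let C be any twisted product of A and B. Then for each relation symbol R, R(C) is an (ε_A + ε_B)-expander relation. -/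
open Finset

attribute [local instance] Classical.propDecidable

/-- A twisted product of relational structures `(A, RA)` and `(B, RB)` of type `ar : ι → ℕ`:
a family of relations `RC` on `A × B`, together with, for each symbol `i` and each tuple
`t ∈ RB i`, bijections `α i t j : A → π_B⁻¹(t j)` (injective maps into the fiber over `t j`)
such that `x ∈ RA i ↔ (α i t · (x ·)) ∈ RC i`, the second projection is a homomorphism, and
every tuple of `RC i` arises as such an image. -/
structure TwistedProduct {ι A B : Type*} (ar : ι → ℕ)
    (RA : ∀ i, Finset (Fin (ar i) → A))
    (RB : ∀ i, Finset (Fin (ar i) → B))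
    (RC : ∀ i, Finset (Fin (ar i) → A × B)) where
  α : ∀ i, (Fin (ar i) → B) → Fin (ar i) → A → A × B
  α_inj : ∀ i t, t ∈ RB i → ∀ j, Function.Injective (α i t j)
  α_snd : ∀ i t, t ∈ RB i → ∀ j x, (α i t j x).2 = t j
  mem_iff : ∀ i t, t ∈ RB i → ∀ x : Fin (ar i) → A,
    x ∈ RA i ↔ (fun j => α i t j (x j)) ∈ RC i
  proj_mem : ∀ i, ∀ u ∈ RC i, (fun j => (u j).2) ∈ RB i
  exists_preimage : ∀ i, ∀ u ∈ RC i,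
    ∃ x ∈ RA i, ∀ j, α i (fun j' => (u j').2) j (x j) = u j

/-- The degree of an element: the number of relational tuples containing it,
with multiplicity. -/
noncomputable def degree {ι X : Type*} [Fintype ι] (ar : ι → ℕ)
    (R : ∀ i, Finset (Fin (ar i) → X)) (x : X) : ℕ :=
  ∑ i, ∑ t ∈ R i, (Finset.univ.filter fun j => t j = x).card

/-- The maximal degree `Δ` of a relational structure. -/
noncomputable def maxDegree {ι X : Type*} [Fintype ι] [Fintype X] (ar : ι → ℕ)
    (R : ∀ i, Finset (Fin (ar i) → X)) : ℕ :=
  Finset.univ.sup (degree ar R)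

/-- `f` is a homomorphism of relational structures. -/
def IsHom {ι X Y : Type*} (ar : ι → ℕ) (RX : ∀ i, Finset (Fin (ar i) → X))
    (RY : ∀ i, Finset (Fin (ar i) → Y)) (f : X → Y) : Prop :=
  ∀ i, ∀ t ∈ RX i, (fun j => f (t j)) ∈ RY i

/-!
Write `S_b = {a | (a, b) ∈ S}` and `S^a = {b | (a, b) ∈ S}` for `S ⊆ A × B`. Every tuple of
`R(C)` lies over a unique `t ∈ R(B)`, and the tuples over `t` form a copy of `R(A)` whose `j`-th
coordinate runs through the fibre over `t j`. Counting the tuples of `R(C)` with coordinates in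
`S₁, …, S_r` fibre by fibre, the expander property of `R(A)` replaces the count over `t` by
`|R(A)| ∏ⱼ |(Sⱼ)_{t j}| / |A|^r`, with error `< ε_A |R(A)|`. Expanding the product,
`∑_{t ∈ R(B)} ∏ⱼ |(Sⱼ)_{t j}|` is the sum over `x ∈ A^r` of the counts of `R(B)` in the sets
`(Sⱼ)^{x j}`, so the expander property of `R(B)` replaces it by `|R(B)| ∏ⱼ |Sⱼ| / |B|^r`, with
error `≤ |A|^r ε_B |R(B)|`. Weighted by `|R(A)| / |A|^r`, the two errors add up to
`(ε_A + ε_B) |R(A)| |R(B)| = (ε_A + ε_B) |R(C)|`.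
-/

section ProdSections

variable {A B : Type*} [Fintype A] [Fintype B]

noncomputable def leftSection (S : Finset (A × B)) (b : B) : Finset A :=
  univ.filter fun a => (a, b) ∈ S

noncomputable def rightSection (S : Finset (A × B)) (a : A) : Finset B :=
  univ.filter fun b => (a, b) ∈ S

lemma sum_card_rightSection (S : Finset (A × B)) : ∑ a, #(rightSection S a) = #S := by
  simp only [rightSection, card_filter]
  rw [← Fintype.sum_prod_type (fun p => if p ∈ S then 1 else 0), sum_boole, filter_mem_eq_inter,
    univ_inter, Nat.cast_id]

lemma sum_prod_card_rightSection {n : ℕ} (S : Fin n → Finset (A × B)) :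
    ∑ x : Fin n → A, ∏ j, (#(rightSection (S j) (x j)) : ℝ) = ∏ j, (#(S j) : ℝ) := by
  rw [← Fintype.prod_sum fun j a => (#(rightSection (S j) a) : ℝ)]
  exact prod_congr rfl fun j _ => mod_cast sum_card_rightSection (S j)

lemma relCount_eq_relApply {S : Type*} {n : ℕ} (R : Finset (Fin n → S)) (T : Fin n → Finset S) :
    relCount R T = relApply R fun j s => if s ∈ T j then 1 else 0 := by
  simp only [relCount, relApply, natCast_card_filter, prod_ite_zero, prod_const_one,
    mem_univ, forall_const]

/-- Double counting the pairs `(t, x) ∈ R × A^n` with `(x j, t j) ∈ S j` for all `j`. -/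
lemma sum_prod_card_leftSection {n : ℕ} (R : Finset (Fin n → B)) (S : Fin n → Finset (A × B)) :
    ∑ t ∈ R, ∏ j, (#(leftSection (S j) (t j)) : ℝ) =
      ∑ x : Fin n → A, relCount R fun j => rightSection (S j) (x j) := by
  simp only [relCount_eq_relApply, relApply, leftSection, rightSection, natCast_card_filter,
    Fintype.prod_sum, mem_filter, mem_univ, true_and]
  exact sum_comm

end ProdSections

lemma abs_sum_sub_sum_le {α : Type*} (s : Finset α) (f g : α → ℝ) :
    |∑ x ∈ s, f x - ∑ x ∈ s, g x| ≤ ∑ x ∈ s, |f x - g x| := by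
  rw [← sum_sub_distrib]
  exact abs_sum_le_sum_abs _ _

lemma IsExpanderRel.nonempty {S : Type*} [Fintype S] {n : ℕ} {ε : ℝ} {R : Finset (Fin n → S)}
    (h : IsExpanderRel ε R) : R.Nonempty := by
  rw [nonempty_iff_ne_empty]
  rintro rfl
  simpa [relCount] using h fun _ => ∅

lemma IsExpanderRel.abs_sum_prod_card_leftSection_sub_le {A B : Type*} [Fintype A] [Fintype B]
    {n : ℕ} {ε : ℝ} {R : Finset (Fin n → B)} (hR : IsExpanderRel ε R)
    (S : Fin n → Finset (A × B)) :
    |∑ t ∈ R, ∏ j, (#(leftSection (S j) (t j)) : ℝ) - #R * (∏ j, (#(S j) : ℝ)) / Fintype.card B ^ n|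
      ≤ Fintype.card A ^ n * (ε * #R) := by
  rw [sum_prod_card_leftSection, ← sum_prod_card_rightSection, mul_sum, sum_div]
  calc _ ≤ ∑ x : Fin n → A, |relCount R (fun j => rightSection (S j) (x j)) -
          #R * (∏ j, (#(rightSection (S j) (x j)) : ℝ)) / Fintype.card B ^ n| :=
        abs_sum_sub_sum_le _ _ _
    _ ≤ ∑ _x : Fin n → A, ε * #R := sum_le_sum fun x _ => (hR _).le
    _ = Fintype.card A ^ n * (ε * #R) := by simp

namespace TwistedProduct

variable {ι A B : Type*} {ar : ι → ℕ} {RA : ∀ i, Finset (Fin (ar i) → A)}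
  {RB : ∀ i, Finset (Fin (ar i) → B)} {RC : ∀ i, Finset (Fin (ar i) → A × B)}

def lift (T : TwistedProduct ar RA RB RC) (i : ι) (t : Fin (ar i) → B) (x : Fin (ar i) → A) :
    Fin (ar i) → A × B :=
  fun j => T.α i t j (x j)

lemma lift_injOn (T : TwistedProduct ar RA RB RC) (i : ι) :
    Set.InjOn (fun p : (Fin (ar i) → B) × (Fin (ar i) → A) => T.lift i p.1 p.2)
      (RB i ×ˢ RA i : Finset _) := by
  rintro ⟨t, x⟩ hp ⟨t', x'⟩ hp' h
  simp only [coe_product, Set.mem_prod, mem_coe] at hp hp'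
  have hj j : T.α i t j (x j) = T.α i t' j (x' j) := congrFun h j
  obtain rfl : t = t' := funext fun j => by
    rw [← T.α_snd i t hp.1 j (x j), ← T.α_snd i t' hp'.1 j (x' j), hj]
  exact Prod.ext rfl (funext fun j => T.α_inj i t hp.1 j (hj j))

lemma sum_eq_sum_sum_lift (T : TwistedProduct ar RA RB RC) (i : ι) {M : Type*} [AddCommMonoid M]
    (f : (Fin (ar i) → A × B) → M) :
    ∑ u ∈ RC i, f u = ∑ t ∈ RB i, ∑ x ∈ RA i, f (T.lift i t x) := by
  rw [← sum_product']
  refine (sum_bij (fun p _ => T.lift i p.1 p.2) (fun p hp => ?_)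
    (fun p hp q hq => T.lift_injOn i hp hq) (fun u hu => ?_) fun _ _ => rfl).symm
  · rw [mem_product] at hp
    exact (T.mem_iff i p.1 hp.1 p.2).mp hp.2
  · obtain ⟨x, hx, hxu⟩ := T.exists_preimage i u hu
    exact ⟨(_, x), mem_product.mpr ⟨T.proj_mem i u hu, hx⟩, funext hxu⟩

lemma card_eq_mul (T : TwistedProduct ar RA RB RC) (i : ι) : #(RC i) = #(RB i) * #(RA i) := by
  rw [card_eq_sum_ones, T.sum_eq_sum_sum_lift i]
  simp

variable [Fintype A]

/-- Over `t j`, the map `α i t j` is a bijection of `A` onto the fibre `A × {t j}`. -/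
lemma card_filter_α_mem [Fintype B] (T : TwistedProduct ar RA RB RC) (i : ι)
    {t : Fin (ar i) → B} (ht : t ∈ RB i) (j : Fin (ar i)) (S : Finset (A × B)) :
    #(univ.filter fun a => T.α i t j a ∈ S) = #(leftSection S (t j)) := by
  have hfst : Function.Bijective fun a => (T.α i t j a).1 :=
    Finite.injective_iff_bijective.mp fun a b h =>
      T.α_inj i t ht j (Prod.ext h (by rw [T.α_snd i t ht, T.α_snd i t ht]))
  have hα a : T.α i t j a = ((T.α i t j a).1, t j) := Prod.ext rfl (T.α_snd i t ht j a)
  refine card_nbij (fun a => (T.α i t j a).1) (fun a ha => ?_) hfst.1.injOn fun a ha => ?_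
  · simpa [leftSection, ← hα] using ha
  · obtain ⟨b, rfl⟩ := hfst.2 a
    exact ⟨b, by simpa [leftSection, ← hα] using ha, rfl⟩

lemma relCount_eq_sum_relCount (T : TwistedProduct ar RA RB RC) (i : ι)
    (S : Fin (ar i) → Finset (A × B)) :
    relCount (RC i) S =
      ∑ t ∈ RB i, relCount (RA i) fun j => univ.filter fun a => T.α i t j a ∈ S j := by
  simp only [relCount, natCast_card_filter, T.sum_eq_sum_sum_lift i, lift, mem_filter, mem_univ,
    true_and]
  exact sum_congr rfl fun _ _ => sum_congr rfl fun _ _ => by congr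

lemma abs_relCount_sub_lt [Fintype B] (T : TwistedProduct ar RA RB RC) (i : ι) {ε : ℝ}
    (hA : IsExpanderRel ε (RA i)) (hB : (RB i).Nonempty) (S : Fin (ar i) → Finset (A × B)) :
    |relCount (RC i) S - #(RA i) / Fintype.card A ^ ar i *
        ∑ t ∈ RB i, ∏ j, (#(leftSection (S j) (t j)) : ℝ)| < #(RB i) * (ε * #(RA i)) := by
  rw [T.relCount_eq_sum_relCount, mul_sum]
  calc _ ≤ ∑ t ∈ RB i, |relCount (RA i) (fun j => univ.filter fun a => T.α i t j a ∈ S j) -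
          #(RA i) / Fintype.card A ^ ar i * ∏ j, (#(leftSection (S j) (t j)) : ℝ)| :=
        abs_sum_sub_sum_le _ _ _
    _ < ∑ _t ∈ RB i, ε * #(RA i) := sum_lt_sum_of_nonempty hB fun t ht => by
        have h := hA fun j => univ.filter fun a => T.α i t j a ∈ S j
        simp only [T.card_filter_α_mem i ht] at h
        rwa [div_mul_eq_mul_div]
    _ = #(RB i) * (ε * #(RA i)) := by simp

end TwistedProduct

theorem twistedProduct_isExpanderRel_general
    {ι A B : Type*} [Fintype A] [Fintype B] (ar : ι → ℕ)
    (RA : ∀ i, Finset (Fin (ar i) → A)) (RB : ∀ i, Finset (Fin (ar i) → B))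
    (RC : ∀ i, Finset (Fin (ar i) → A × B))
    (T : TwistedProduct ar RA RB RC) (εA εB : ℝ)
    (hA : ∀ i, IsExpanderRel εA (RA i)) (hB : ∀ i, IsExpanderRel εB (RB i)) :
    ∀ i, IsExpanderRel (εA + εB) (RC i) := by
  intro i S
  obtain ⟨x₀, -⟩ := (hA i).nonempty
  have hApow : (0 : ℝ) < Fintype.card A ^ ar i := by
    have := Fintype.card_pos_iff.mpr ⟨x₀⟩
    simp only [Fintype.card_fun, Fintype.card_fin] at this
    exact_mod_cast this
  set c : ℝ := #(RA i) / Fintype.card A ^ ar i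
  have hc : 0 ≤ c := by positivity
  set W : ℝ := ∑ t ∈ RB i, ∏ j, (#(leftSection (S j) (t j)) : ℝ)
  have hsplit : relCount (RC i) S - #(RC i) * (∏ j, (#(S j) : ℝ)) / Fintype.card (A × B) ^ ar i =
      (relCount (RC i) S - c * W) +
        c * (W - #(RB i) * (∏ j, (#(S j) : ℝ)) / Fintype.card B ^ ar i) := by
    rw [T.card_eq_mul, Fintype.card_prod]
    push_cast
    field_simp
    ring
  rw [hsplit]
  calc _ ≤ |relCount (RC i) S - c * W| +
        c * |W - #(RB i) * (∏ j, (#(S j) : ℝ)) / Fintype.card B ^ ar i| :=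
        (abs_add_le _ _).trans_eq (by rw [abs_mul, abs_of_nonneg hc])
    _ < #(RB i) * (εA * #(RA i)) + c * (Fintype.card A ^ ar i * (εB * #(RB i))) :=
        add_lt_add_of_lt_of_le (T.abs_relCount_sub_lt i (hA i) (hB i).nonempty S)
          (mul_le_mul_of_nonneg_left ((hB i).abs_sum_prod_card_leftSection_sub_le S) hc)
    _ = (εA + εB) * #(RC i) := by
        rw [T.card_eq_mul]
        simp only [c]
        field_simp
        push_cast
        ring

/-- Lemma 5: any twisted product of an `ε_A`-expander and an `ε_B`-expander is an
`(ε_A + ε_B)`-expander (relationwise). -/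
theorem twistedProduct_isExpanderRel
    {ι A B : Type*} [Fintype A] [Fintype B] (ar : ι → ℕ) (r : ℕ) (har : ∀ i, ar i ≤ r)
    (RA : ∀ i, Finset (Fin (ar i) → A)) (RB : ∀ i, Finset (Fin (ar i) → B))
    (RC : ∀ i, Finset (Fin (ar i) → A × B))
    (T : TwistedProduct ar RA RB RC) (εA εB : ℝ)
    (hA : ∀ i, IsExpanderRel εA (RA i)) (hB : ∀ i, IsExpanderRel εB (RB i)) :
    ∀ i, IsExpanderRel (εA + εB) (RC i) :=
  twistedProduct_isExpanderRel_general ar RA RB RC T εA εB hA hB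
end

section
/- Let C be a twisted product of relational structures A and B of type τ, with maximal degrees Δ(A) and Δ(B). Then Δ(C) ≤ Δ(A)·Δ(B). -/
open Finset

attribute [local instance] Classical.propDecidable

/-! Count the tuples of `C` containing `c = (a, b)` position by position. A tuple of `C` with
`c` at position `j` projects to a tuple `t` of `B` with `b` at position `j`, and the tuples of
`C` over a fixed `t` with `c` at position `j` are images of tuples of `A` whose `j`-th entry is
the unique preimage of `c` under the injective `α_{t,j}`; there are at most `Δ(A)` of those. -/

section Degree

variable {ι X : Type*} [Fintype ι] [DecidableEq X] (ar : ι → ℕ)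
  (R : ∀ i, Finset (Fin (ar i) → X))

lemma degree_eq_sum_card_filter (x : X) :
    degree ar R x = ∑ i, ∑ j, #{t ∈ R i | t j = x} := by
  unfold degree
  refine sum_congr rfl fun i _ => ?_
  simp only [card_filter]
  convert sum_comm

variable [Fintype X]

lemma card_filter_coord_le_maxDegree (i : ι) (j : Fin (ar i)) (x : X) :
    #{t ∈ R i | t j = x} ≤ maxDegree ar R :=
  calc #{t ∈ R i | t j = x}
      ≤ ∑ j', #{t ∈ R i | t j' = x} :=
        single_le_sum (f := fun j' => #{t ∈ R i | t j' = x})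
          (fun _ _ => Nat.zero_le _) (mem_univ j)
    _ ≤ ∑ i', ∑ j', #{t ∈ R i' | t j' = x} :=
        single_le_sum (f := fun i' => ∑ j', #{t ∈ R i' | t j' = x})
          (fun _ _ => Nat.zero_le _) (mem_univ i)
    _ = degree ar R x := (degree_eq_sum_card_filter ar R x).symm
    _ ≤ maxDegree ar R := le_sup (mem_univ x)

lemma card_filter_injective_coord_le_maxDegree {Y : Type*} [DecidableEq Y] {g : X → Y}
    (hg : Function.Injective g) (i : ι) (j : Fin (ar i)) (y : Y) :
    #{t ∈ R i | g (t j) = y} ≤ maxDegree ar R := by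
  by_cases hy : y ∈ Set.range g
  · obtain ⟨x, rfl⟩ := hy
    simp_rw [hg.eq_iff]
    exact card_filter_coord_le_maxDegree ar R i j x
  · rw [filter_false_of_mem fun t _ h => hy ⟨t j, h⟩, card_empty]
    exact Nat.zero_le _

end Degree

namespace TwistedProduct

variable {ι A B : Type*} [Fintype ι] [Fintype A] {ar : ι → ℕ}
  {RA : ∀ i, Finset (Fin (ar i) → A)} {RB : ∀ i, Finset (Fin (ar i) → B)}
  {RC : ∀ i, Finset (Fin (ar i) → A × B)}

lemma card_fiber_le_maxDegree (T : TwistedProduct ar RA RB RC) {i : ι} {t : Fin (ar i) → B}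
    (ht : t ∈ RB i) (j : Fin (ar i)) (c : A × B) :
    #{u ∈ RC i | u j = c ∧ (fun j' => (u j').2) = t} ≤ maxDegree ar RA := by
  have hsub : {u ∈ RC i | u j = c ∧ (fun j' => (u j').2) = t}
      ⊆ image (fun x j' => T.α i t j' (x j')) {x ∈ RA i | T.α i t j (x j) = c} := by
    intro u hu
    obtain ⟨huC, huc, rfl⟩ := mem_filter.mp hu
    obtain ⟨x, hx, hux⟩ := T.exists_preimage i u huC
    exact mem_image.mpr ⟨x, mem_filter.mpr ⟨hx, (hux j).trans huc⟩, funext hux⟩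
  calc _ ≤ _ := card_le_card hsub
    _ ≤ _ := card_image_le
    _ ≤ _ := card_filter_injective_coord_le_maxDegree ar RA (T.α_inj i t ht j) i j c

lemma card_filter_coord_le (T : TwistedProduct ar RA RB RC) (i : ι) (j : Fin (ar i))
    (c : A × B) :
    #{u ∈ RC i | u j = c} ≤ maxDegree ar RA * #{t ∈ RB i | t j = c.2} := by
  refine card_le_mul_card_image_of_maps_to (f := fun u j' => (u j').2) ?_ _ ?_
  · intro u hu
    obtain ⟨huC, rfl⟩ := mem_filter.mp hu
    exact mem_filter.mpr ⟨T.proj_mem i u huC, rfl⟩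
  · intro t ht
    rw [filter_filter]
    exact T.card_fiber_le_maxDegree (mem_filter.mp ht).1 j c

lemma degree_le (T : TwistedProduct ar RA RB RC) (c : A × B) :
    degree ar RC c ≤ maxDegree ar RA * degree ar RB c.2 := by
  simp only [degree_eq_sum_card_filter, mul_sum]
  exact sum_le_sum fun i _ => sum_le_sum fun j _ => T.card_filter_coord_le i j c

end TwistedProduct

/-- The maximal degree of a twisted product is at most the product of the maximal degrees. -/
theorem twistedProduct_maxDegree_le
    {ι A B : Type*} [Fintype ι] [Fintype A] [Fintype B] (ar : ι → ℕ)
    (RA : ∀ i, Finset (Fin (ar i) → A)) (RB : ∀ i, Finset (Fin (ar i) → B))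
    (RC : ∀ i, Finset (Fin (ar i) → A × B))
    (T : TwistedProduct ar RA RB RC) :
    maxDegree ar RC ≤ maxDegree ar RA * maxDegree ar RB :=
  Finset.sup_le fun c _ =>
    (T.degree_le c).trans (Nat.mul_le_mul_left _ (le_sup (mem_univ c.2)))
end

section
/- Let A, B, T be relational structures of type τ where every relation symbol is at most r-ary. Suppose every relation of A is an ε-expander relation with ε·|T|^r < 1, and let C be a twisted product of A and B. Then B admits a homomorphism to T if and only if C admits a homomorphism to T. -/
open Finset

attribute [local instance] Classical.propDecidable

namespace IsExpanderRel

variable {S : Type*} [Fintype S] {k : ℕ} {ε : ℝ} {R : Finset (Fin k → S)}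

theorem mul_card_pos (hR : IsExpanderRel ε R) : 0 < ε * R.card :=
  (abs_nonneg _).trans_lt (hR fun _ => ∅)

theorem pos (hR : IsExpanderRel ε R) : 0 < ε :=
  pos_of_mul_pos_left hR.mul_card_pos (Nat.cast_nonneg _)

theorem card_pos (hR : IsExpanderRel ε R) : (0 : ℝ) < R.card :=
  pos_of_mul_pos_right hR.mul_card_pos hR.pos.le

theorem exists_mem_forall_mem [Nonempty S] (hR : IsExpanderRel ε R) {m : ℝ} (hm : 0 < m)
    {T : Fin k → Finset S} (hT : ∀ j, (Fintype.card S : ℝ) / m ≤ (T j).card)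
    (hε : ε * m ^ k < 1) : ∃ x ∈ R, ∀ j, x j ∈ T j := by
  have hS : (0 : ℝ) < Fintype.card S := by exact_mod_cast Fintype.card_pos
  have hprod : (Fintype.card S : ℝ) ^ k ≤ (∏ j, ((T j).card : ℝ)) * m ^ k := by
    rw [← div_le_iff₀ (by positivity)]
    simpa using Finset.prod_le_prod (fun _ _ => by positivity) fun j (_ : j ∈ univ) => hT j
  have hdensity :
      (R.card : ℝ) / m ^ k ≤ R.card * (∏ j, ((T j).card : ℝ)) / Fintype.card S ^ k := by
    rw [div_le_div_iff₀ (by positivity) (by positivity), mul_assoc]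
    gcongr
  have hgap : ε * R.card < R.card / m ^ k := by
    rw [lt_div_iff₀ (by positivity)]
    nlinarith [hR.card_pos]
  have hcount : 0 < relCount R T := by
    linarith [(abs_lt.mp (hR T)).1]
  unfold relCount at hcount
  obtain ⟨x, hx⟩ := Finset.card_pos.mp (by exact_mod_cast hcount)
  exact ⟨x, mem_filter.mp hx⟩

end IsExpanderRel

theorem IsHom.comp {ι X Y Z : Type*} {ar : ι → ℕ} {RX : ∀ i, Finset (Fin (ar i) → X)}
    {RY : ∀ i, Finset (Fin (ar i) → Y)} {RZ : ∀ i, Finset (Fin (ar i) → Z)} {g : Y → Z}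
    {f : X → Y} (hg : IsHom ar RY RZ g) (hf : IsHom ar RX RY f) : IsHom ar RX RZ (g ∘ f) :=
  fun i t ht => hg i _ (hf i t ht)

namespace TwistedProduct

variable {ι A B : Type*} {ar : ι → ℕ} {RA : ∀ i, Finset (Fin (ar i) → A)}
  {RB : ∀ i, Finset (Fin (ar i) → B)} {RC : ∀ i, Finset (Fin (ar i) → A × B)}
  {i : ι} {t : Fin (ar i) → B}

theorem isHom_snd (TP : TwistedProduct ar RA RB RC) : IsHom ar RC RB Prod.snd := TP.proj_mem

theorem α_eq (TP : TwistedProduct ar RA RB RC) (ht : t ∈ RB i) (j : Fin (ar i)) (a : A) :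
    TP.α i t j a = ((TP.α i t j a).1, t j) :=
  Prod.ext rfl (TP.α_snd i t ht j a)

theorem bijective_fst_α [Finite A] (TP : TwistedProduct ar RA RB RC) (ht : t ∈ RB i)
    (j : Fin (ar i)) :
    Function.Bijective fun a => (TP.α i t j a).1 :=
  Finite.injective_iff_bijective.mp fun _ _ h =>
    TP.α_inj i t ht j (Prod.ext h ((TP.α_snd i t ht j _).trans (TP.α_snd i t ht j _).symm))

theorem card_filter_comp_α [Fintype A] (TP : TwistedProduct ar RA RB RC) (ht : t ∈ RB i)
    (j : Fin (ar i)) (p : A × B → Prop) :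
    #{a | p (TP.α i t j a)} = #{a | p (a, t j)} :=
  card_bijective _ (TP.bijective_fst_α ht j) fun a => by
    simp only [mem_filter, mem_univ, true_and]
    rw [← TP.α_eq ht]

/-- Colour each `b` by a colour that `h` gives to at least a `1 / |T|` fraction of the fibre
over `b`; the expander property then finds, for every tuple of `RB`, a tuple of `RA` whose
image in `C` is coloured by `h` exactly as the tuple is coloured by this choice. -/
theorem exists_isHom_of_isHom [Fintype A] [Nonempty A] {T : Type*} [Fintype T] [Nonempty T]
    {RT : ∀ i, Finset (Fin (ar i) → T)} (TP : TwistedProduct ar RA RB RC) {ε : ℝ}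
    (hexp : ∀ i, IsExpanderRel ε (RA i)) (hε : ∀ i, ε * (Fintype.card T : ℝ) ^ ar i < 1)
    {h : A × B → T} (hh : IsHom ar RC RT h) :
    ∃ g : B → T, IsHom ar RB RT g := by
  have hT : (0 : ℝ) < Fintype.card T := by exact_mod_cast Fintype.card_pos
  choose g hg using fun y : B =>
    Fintype.exists_le_card_fiber_of_nsmul_le_card (fun a => h (a, y))
      (b := (Fintype.card A : ℝ) / Fintype.card T)
      (by rw [nsmul_eq_mul, mul_div_cancel₀ _ hT.ne'])
  refine ⟨g, fun i t ht => ?_⟩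
  obtain ⟨x, hx, hxS⟩ := (hexp i).exists_mem_forall_mem hT
    (T := fun j => {a | h (TP.α i t j a) = g (t j)})
    (fun j => by rw [TP.card_filter_comp_α ht j (h · = g (t j))]; exact hg (t j)) (hε i)
  have hcol : (fun j => h (TP.α i t j (x j))) = fun j => g (t j) :=
    funext fun j => (mem_filter.mp (hxS j)).2
  exact hcol ▸ hh i _ ((TP.mem_iff i t ht x).mp hx)

end TwistedProduct

theorem twistedProduct_hom_iff_general
    {ι A B T : Type*} [Fintype A] [Fintype T] [Nonempty A] [Nonempty T]
    (ar : ι → ℕ) (r : ℕ) (har : ∀ i, ar i ≤ r)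
    (RA : ∀ i, Finset (Fin (ar i) → A)) (RB : ∀ i, Finset (Fin (ar i) → B))
    (RC : ∀ i, Finset (Fin (ar i) → A × B)) (RT : ∀ i, Finset (Fin (ar i) → T))
    (TP : TwistedProduct ar RA RB RC) (ε : ℝ)
    (hexp : ∀ i, IsExpanderRel ε (RA i))
    (hε : ε * (Fintype.card T : ℝ) ^ r < 1) :
    (∃ g : B → T, IsHom ar RB RT g) ↔ (∃ h : A × B → T, IsHom ar RC RT h) := by
  refine ⟨fun ⟨g, hg⟩ => ⟨g ∘ Prod.snd, hg.comp TP.isHom_snd⟩,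
    fun ⟨h, hh⟩ => TP.exists_isHom_of_isHom hexp (fun i => ?_) hh⟩
  have hT : (1 : ℝ) ≤ Fintype.card T := by exact_mod_cast Fintype.card_pos
  calc ε * (Fintype.card T : ℝ) ^ ar i ≤ ε * (Fintype.card T : ℝ) ^ r :=
        mul_le_mul_of_nonneg_left (pow_le_pow_right₀ hT (har i)) (hexp i).pos.le
    _ < 1 := hε

/-- Lemma (exphely): if every relation of `A` is an ε-expander with `ε·|T|^r < 1` and `C`
is a twisted product of `A` and `B`, then `B` is homomorphic to `T` iff `C` is. -/
theorem twistedProduct_hom_iff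
    {ι A B T : Type*} [Fintype A] [Fintype B] [Fintype T] [Nonempty A] [Nonempty T]
    (ar : ι → ℕ) (r : ℕ) (har : ∀ i, ar i ≤ r)
    (RA : ∀ i, Finset (Fin (ar i) → A)) (RB : ∀ i, Finset (Fin (ar i) → B))
    (RC : ∀ i, Finset (Fin (ar i) → A × B)) (RT : ∀ i, Finset (Fin (ar i) → T))
    (TP : TwistedProduct ar RA RB RC) (ε : ℝ)
    (hexp : ∀ i, IsExpanderRel ε (RA i)) (hRA : ∀ i, (RA i).Nonempty)
    (hε : ε * (Fintype.card T : ℝ) ^ r < 1) :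
    (∃ g : B → T, IsHom ar RB RT g) ↔ (∃ h : A × B → T, IsHom ar RC RT h) :=
  twistedProduct_hom_iff_general ar r har RA RB RC RT TP ε hexp hε
end
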